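/- A positive L'-tableau T with parameters (g,d,k) lies in the image of ψ (applied to negative L'-tableaux with the same parameters) if and only if the bottom row of T contains a blue entry equal to 1. -/
import Mathlib


/-- A cell of an L'-tableau: red with a value, blue with a value, or gray. -/
inductive LpCell : Type where
  | red (v : ℕ) : LpCell
  | blue (v : ℕ) : LpCell
  | gray : LpCell
deriving DecidableEq

/-- A positive L'-tableau with parameters (g,d,k): a filling of the 2×(d−1) grid
with a standard Young tableau of size g in the lower-left corner (red), the k−1
rightmost boxes of the top row gray, and a {0,1} semistandard skew filling of the
remaining boxes (blue). Row 0 is the bottom row. -/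
structure PosLpTableau (g d k : ℕ) where
  entry : Fin 2 → Fin (d-1) → LpCell
  gray_iff : ∀ (i : Fin 2) (j : Fin (d-1)),
    entry i j = LpCell.gray ↔ (i = 1 ∧ (d-1) - (k-1) ≤ (j : ℕ))
  red_left : ∀ (i : Fin 2) (j j' : Fin (d-1)) (v : ℕ),
    entry i j = LpCell.red v → j' ≤ j → ∃ w, entry i j' = LpCell.red w
  red_down : ∀ (i i' : Fin 2) (j : Fin (d-1)) (v : ℕ),
    entry i j = LpCell.red v → i' ≤ i → ∃ w, entry i' j = LpCell.red w
  red_vals : ∀ (i : Fin 2) (j : Fin (d-1)) (v : ℕ), entry i j = LpCell.red v → 1 ≤ v ∧ v ≤ g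
  red_content : ∀ v : ℕ, 1 ≤ v → v ≤ g → ∃! p : Fin 2 × Fin (d-1), entry p.1 p.2 = LpCell.red v
  red_row : ∀ (i : Fin 2) (j j' : Fin (d-1)) (a b : ℕ),
    entry i j = LpCell.red a → entry i j' = LpCell.red b → j < j' → a < b
  red_col : ∀ (i i' : Fin 2) (j : Fin (d-1)) (a b : ℕ),
    entry i j = LpCell.red a → entry i' j = LpCell.red b → i < i' → a < b
  blue_vals : ∀ (i : Fin 2) (j : Fin (d-1)) (v : ℕ), entry i j = LpCell.blue v → v ≤ 1
  blue_row : ∀ (i : Fin 2) (j j' : Fin (d-1)) (a b : ℕ),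
    entry i j = LpCell.blue a → entry i j' = LpCell.blue b → j < j' → a ≤ b
  blue_col : ∀ (i i' : Fin 2) (j : Fin (d-1)) (a b : ℕ),
    entry i j = LpCell.blue a → entry i' j = LpCell.blue b → i < i' → a < b

/-- A negative L'-tableau with parameters (g,d,k): the same data on a 2×(d−2) grid
with k−2 gray boxes at the right of the top row. -/
def NegLpTableau (g d k : ℕ) : Type := PosLpTableau g (d-1) (k-1)

/-- A positive L'-tableau T lies in the image of ψ (appending a blue 1 to the
bottom row and a gray box to the top row of a negative L'-tableau) if and only
if the bottom row of T contains a blue 1. -/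
theorem stmt_13 (g d k : ℕ) (hk : 2 ≤ k) (hkd : k ≤ d) (T : PosLpTableau g d k) :
    (∃ S : NegLpTableau g d k,
        (∀ (i : Fin 2) (j : ℕ) (hj : j < d - 2),
          T.entry i ⟨j, by omega⟩ = S.entry i ⟨j, by omega⟩) ∧
        T.entry 0 ⟨d - 2, by omega⟩ = LpCell.blue 1 ∧
        T.entry 1 ⟨d - 2, by omega⟩ = LpCell.gray) ↔
      ∃ j : Fin (d - 1), T.entry 0 j = LpCell.blue 1 := by
  have hd : 2 ≤ d := le_trans hk hkd
  constructor
  · rintro ⟨S, _, hb, _⟩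
    exact ⟨⟨d - 2, by omega⟩, hb⟩
  · rintro ⟨j, hj⟩
    have hjle : (j : ℕ) ≤ d - 2 := by have := j.2; omega
    have hgray : T.entry 1 ⟨d - 2, by omega⟩ = LpCell.gray := by
      rw [T.gray_iff]
      exact ⟨rfl, by simp; omega⟩
    have hblue : T.entry 0 ⟨d - 2, by omega⟩ = LpCell.blue 1 := by
      rcases h : T.entry 0 ⟨d - 2, by omega⟩ with v | v | _
      · obtain ⟨w, hw⟩ := T.red_left 0 ⟨d - 2, by omega⟩ j v h (by simpa [Fin.le_def] using hjle)
        rw [hj] at hw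
        exact absurd hw (by simp)
      · have hv1 : v ≤ 1 := T.blue_vals _ _ _ h
        rcases eq_or_lt_of_le hjle with heq | hlt
        · have hje : j = ⟨d - 2, by omega⟩ := Fin.ext heq
          exact h.symm.trans (hje ▸ hj)
        · have hge := T.blue_row 0 j ⟨d - 2, by omega⟩ 1 v hj h (by simpa [Fin.lt_def] using hlt)
          have : v = 1 := le_antisymm hv1 hge
          rw [this]
      · have := ((T.gray_iff 0 ⟨d - 2, by omega⟩).mp h).1
        exact absurd this (by simp)
    have hle : d - 1 - 1 ≤ d - 1 := by omega
    let C : Fin (d - 1 - 1) → Fin (d - 1) := Fin.castLE hle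
    refine ⟨⟨fun i j' => T.entry i (C j'), ?_, ?_, ?_, ?_, ?_, ?_, ?_, ?_, ?_, ?_⟩,
      fun i j' hj' => rfl, hblue, hgray⟩
    · intro i j'
      rw [T.gray_iff]
      constructor
      · rintro ⟨hi, hle'⟩
        refine ⟨hi, ?_⟩
        simp [C, Fin.castLE] at hle' ⊢
        omega
      · rintro ⟨hi, hle'⟩
        refine ⟨hi, ?_⟩
        simp [C, Fin.castLE] at hle' ⊢
        omega
    · intro i j1 j2 v hv hle'
      exact T.red_left i (C j1) (C j2) v hv (Fin.le_def.mpr (Fin.le_def.mp hle'))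
    · intro i i' j1 v hv hle'
      exact T.red_down i i' (C j1) v hv hle'
    · intro i j1 v hv
      exact T.red_vals i (C j1) v hv
    · intro v h1 hv
      obtain ⟨p, hp, hup⟩ := T.red_content v h1 hv
      have hp2 : (p.2 : ℕ) < d - 1 - 1 := by
        by_contra hcon
        have hv2 : (p.2 : ℕ) < d - 1 := p.2.2
        have hval : (p.2 : ℕ) = d - 2 := by omega
        have hpe : p.2 = ⟨d - 2, by omega⟩ := Fin.ext hval
        have h01 : (p.1 : ℕ) = 0 ∨ (p.1 : ℕ) = 1 := by omega
        rcases h01 with h0 | h1'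
        · have hq : p.1 = 0 := Fin.ext h0
          rw [hq, hpe] at hp
          simpa using hblue.symm.trans hp
        · have hq : p.1 = 1 := Fin.ext h1'
          rw [hq, hpe] at hp
          simpa using hgray.symm.trans hp
      refine ⟨(p.1, ⟨(p.2 : ℕ), hp2⟩), hp, ?_⟩
      rintro ⟨qi, qj⟩ hq
      have := hup (qi, C qj) hq
      have h1' : qi = p.1 := congrArg Prod.fst this
      have h2' : (C qj : Fin (d-1)) = p.2 := congrArg Prod.snd this
      have h3' : (qj : ℕ) = (p.2 : ℕ) := congrArg Fin.val h2'
      exact Prod.ext h1' (Fin.ext h3')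
    · intro i j1 j2 a b ha hb hlt'
      exact T.red_row i (C j1) (C j2) a b ha hb (Fin.lt_def.mpr (Fin.lt_def.mp hlt'))
    · intro i i' j1 a b ha hb hlt'
      exact T.red_col i i' (C j1) a b ha hb hlt'
    · intro i j1 v hv
      exact T.blue_vals i (C j1) v hv
    · intro i j1 j2 a b ha hb hlt'
      exact T.blue_row i (C j1) (C j2) a b ha hb (Fin.lt_def.mpr (Fin.lt_def.mp hlt'))
    · intro i i' j1 a b ha hb hlt'
      exact T.blue_col i i' (C j1) a b ha hb hlt'
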